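/- Suppose σ₁ and σ_f are density matrices on a finite-dimensional Hilbert space and f is a positive matrix with ‖f‖_p defined via a normalized trace τ such that τ(f) = 1, and suppose ‖σ₁‖_p ≤ ‖σ_f‖_p ≤ ‖f‖_p · ‖σ₁‖_p holds for all p ∈ [1, ∞). Then H(σ₁) − τ(f log f) ≤ H(σ_f) ≤ H(σ₁). -/

import Mathlib

/-!
Removing the `1/p`-th roots, the hypotheses say `A p ≤ B p ≤ C p * A p` for `p ≥ 1`, where
`A`, `B`, `C` are the `p`-th moments of `σ₁`, `σ_f` and (normalized) `f`. The trace
normalizations make all three equal to `1` at `p = 1`, so these inequalities between functions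
touching at the endpoint of `[1, ∞)` pass to their derivatives at `1`, and the derivative of
`p ↦ ∑ xᵢ ^ p` at `1` is `∑ xᵢ log xᵢ = -H`.
-/

open Real Set Finset
open scoped ComplexOrder

theorem HasDerivAt.le_of_le_on_Ici {f g : ℝ → ℝ} {f' g' a : ℝ} (hf : HasDerivAt f f' a)
    (hg : HasDerivAt g g' a) (heq : f a = g a) (hle : ∀ p, a ≤ p → f p ≤ g p) : f' ≤ g' := by
  have hmin : IsLocalMinOn (g - f) (Ici a) a :=
    IsMinOn.localize fun p hp ↦ by simpa [heq] using hle p hp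
  have hone : (1 : ℝ) ∈ posTangentConeAt (Ici a) a :=
    mem_posTangentConeAt_of_segment_subset <| by
      rw [segment_eq_Icc (by linarith)]; exact Icc_subset_Ici_self
  simpa using hmin.hasFDerivWithinAt_nonneg (hg.sub hf).hasFDerivAt.hasFDerivWithinAt hone

theorem Real.hasDerivAt_const_rpow_of_nonneg {x p : ℝ} (hx : 0 ≤ x) (hp : p ≠ 0) :
    HasDerivAt (fun q ↦ x ^ q) (x ^ p * log x) p := by
  rcases hx.eq_or_lt with rfl | hx
  · have : (fun q : ℝ ↦ (0 : ℝ) ^ q) =ᶠ[nhds p] fun _ ↦ 0 := by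
      filter_upwards [isOpen_ne.mem_nhds hp] with q hq using zero_rpow hq
    simpa using (hasDerivAt_const p (0 : ℝ)).congr_of_eventuallyEq this
  · exact (hasStrictDerivAt_const_rpow hx p).hasDerivAt

theorem hasDerivAt_sum_rpow_one {ι : Type*} [Fintype ι] {x : ι → ℝ} (hx : ∀ i, 0 ≤ x i) :
    HasDerivAt (fun p : ℝ ↦ ∑ i, x i ^ p) (∑ i, x i * log (x i)) 1 := by
  simpa using HasDerivAt.fun_sum fun i _ ↦ hasDerivAt_const_rpow_of_nonneg (hx i) one_ne_zero

theorem Matrix.IsHermitian.sum_eigenvalues_eq_of_trace_eq {ι : Type*} [Fintype ι]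
    [DecidableEq ι] {A : Matrix ι ι ℂ} (hA : A.IsHermitian) {t : ℝ} (h : A.trace = t) :
    ∑ i, hA.eigenvalues i = t := by
  simpa using congrArg Complex.re (hA.trace_eq_sum_eigenvalues.symm.trans h)

theorem sum_negMulLog_eq_neg_sum_mul_log {ι : Type*} [Fintype ι] (x : ι → ℝ) :
    ∑ i, negMulLog (x i) = -∑ i, x i * log (x i) := by
  simp [negMulLog, sum_neg_distrib]

/-- Suppose `σ₁` and `σ_f` are density matrices, `f` is a positive
matrix with normalized trace `τ(f) = 1`, and the comparison property
`‖σ₁‖_p ≤ ‖σ_f‖_p ≤ ‖f‖_p ‖σ₁‖_p` holds for all `p ∈ [1, ∞)` (Schatten norms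
computed spectrally, `‖f‖_p = τ(f^p)^{1/p}` with respect to the normalized trace).
Then `H(σ₁) − τ(f log f) ≤ H(σ_f) ≤ H(σ₁)`. -/
theorem entropy_comparison_of_schatten_comparison {m n : ℕ} [NeZero n]
    (σ₁ σf : Matrix (Fin m) (Fin m) ℂ) (f : Matrix (Fin n) (Fin n) ℂ)
    (h1 : σ₁.PosSemidef) (hfout : σf.PosSemidef) (hfN : f.PosSemidef)
    (htr1 : σ₁.trace = 1) (htrf : σf.trace = 1)
    (htrN : f.trace = (n : ℂ))
    (hcomp : ∀ p : ℝ, 1 ≤ p →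
      (∑ i, h1.1.eigenvalues i ^ p) ^ (1 / p)
          ≤ (∑ i, hfout.1.eigenvalues i ^ p) ^ (1 / p) ∧
      (∑ i, hfout.1.eigenvalues i ^ p) ^ (1 / p)
          ≤ ((1 / (n : ℝ)) * ∑ j, hfN.1.eigenvalues j ^ p) ^ (1 / p) *
              (∑ i, h1.1.eigenvalues i ^ p) ^ (1 / p)) :
    (∑ i, Real.negMulLog (h1.1.eigenvalues i))
        - (1 / (n : ℝ)) * ∑ j, hfN.1.eigenvalues j * Real.log (hfN.1.eigenvalues j)
      ≤ ∑ i, Real.negMulLog (hfout.1.eigenvalues i) ∧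
    (∑ i, Real.negMulLog (hfout.1.eigenvalues i))
      ≤ ∑ i, Real.negMulLog (h1.1.eigenvalues i) := by
  set a := h1.1.eigenvalues
  set b := hfout.1.eigenvalues
  set c := hfN.1.eigenvalues
  have ha : ∀ i, 0 ≤ a i := h1.eigenvalues_nonneg
  have hb : ∀ i, 0 ≤ b i := hfout.eigenvalues_nonneg
  have hc : ∀ j, 0 ≤ c j := hfN.eigenvalues_nonneg
  have hsa : ∑ i, a i = 1 := h1.1.sum_eigenvalues_eq_of_trace_eq (by simpa using htr1)
  have hsb : ∑ i, b i = 1 := hfout.1.sum_eigenvalues_eq_of_trace_eq (by simpa using htrf)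
  have hsc : ∑ j, c j = n := hfN.1.sum_eigenvalues_eq_of_trace_eq htrN
  have hmoments : ∀ p : ℝ, 1 ≤ p → ∑ i, a i ^ p ≤ ∑ i, b i ^ p ∧
      ∑ i, b i ^ p ≤ (1 / (n : ℝ) * ∑ j, c j ^ p) * ∑ i, a i ^ p := by
    intro p hp
    have hA : 0 ≤ ∑ i, a i ^ p := sum_nonneg fun i _ ↦ rpow_nonneg (ha i) p
    have hB : 0 ≤ ∑ i, b i ^ p := sum_nonneg fun i _ ↦ rpow_nonneg (hb i) p
    have hC : 0 ≤ 1 / (n : ℝ) * ∑ j, c j ^ p :=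
      mul_nonneg (by positivity) (sum_nonneg fun j _ ↦ rpow_nonneg (hc j) p)
    obtain ⟨hlow, hup⟩ := hcomp p hp
    rw [← mul_rpow hC hA] at hup
    have hp' : 0 < 1 / p := by positivity
    exact ⟨(rpow_le_rpow_iff hA hB hp').1 hlow,
      (rpow_le_rpow_iff hB (mul_nonneg hC hA) hp').1 hup⟩
  have dA := hasDerivAt_sum_rpow_one ha
  have dB := hasDerivAt_sum_rpow_one hb
  have dC := (hasDerivAt_sum_rpow_one hc).const_mul (1 / (n : ℝ))
  have hupper := dA.le_of_le_on_Ici dB (by simp [hsa, hsb]) fun p hp ↦ (hmoments p hp).1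
  have hlower :=
    dB.le_of_le_on_Ici (dC.mul dA) (by simp [hsa, hsb, hsc]) fun p hp ↦ (hmoments p hp).2
  simp only [rpow_one, hsa, hsc, one_div_mul_cancel (NeZero.ne (n : ℝ)), one_mul, mul_one]
    at hlower
  simp only [sum_negMulLog_eq_neg_sum_mul_log]
  constructor <;> linarith
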